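/- arXiv:2208.07132 — 4 statements merged into one kernel-verified Lean document; each statement's English description precedes it below -/
import Mathlib

section
/- Let b | λ² ~ Normal(0, q²λ²) and λ² ~ BetaPrime(a_π, a₂) with q, a_π, a₂ > 0. Then the marginal density of b is p(b) = (2πq²)^{−1/2} B(a_π,a₂)^{−1} Γ(a₂+1/2) U(a₂+1/2, 3/2−a_π, b²/(2q²)), where U is the confluent hypergeometric function of the second kind. -/
/-!
Substitute `t = 1/λ`. The Beta-prime law is carried to the Beta-prime law with swapped
parameters, `p_{a,c}(λ) = t² p_{c,a}(t)`, and the Jacobian `t⁻²` of the substitution cancels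
the `t²`. What remains of the Gaussian factor is `√t · e^{-z t}` with `z = b²/(2q²)`, so the
integrand becomes `e^{-z t} t^{c-1/2} (1+t)^{-a-c}`, which is the integral representation of
`Γ(c+1/2) U(c+1/2, 3/2-a, z)`.
-/

open MeasureTheory Real Set

noncomputable def betaFn (a b : ℝ) : ℝ := Gamma a * Gamma b / Gamma (a + b)

noncomputable def betaPrimePDF (a b t : ℝ) : ℝ :=
  t ^ (a - 1) * (1 + t) ^ (-a - b) / betaFn a b

/-- Tricomi's confluent hypergeometric function, through its integral representation, which is
only meaningful for `η > 0`, `z > 0`. -/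
noncomputable def hypU (η ν z : ℝ) : ℝ :=
  (Gamma η)⁻¹ * ∫ t in Ioi (0:ℝ), exp (-z * t) * t ^ (η - 1) * (1 + t) ^ (ν - η - 1)

theorem betaFn_comm (a c : ℝ) : betaFn a c = betaFn c a := by
  rw [betaFn, betaFn, mul_comm, add_comm]

theorem betaPrimePDF_eq_inv_sq_mul_inv {a c l : ℝ} (hl : 0 < l) :
    betaPrimePDF a c l = (l ^ 2)⁻¹ * betaPrimePDF c a l⁻¹ := by
  have hinv : 1 + l⁻¹ = (1 + l) * l⁻¹ := by field_simp; ring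
  have hpow : l ^ (a - 1) = (l ^ 2)⁻¹ * (l ^ (-(c - 1)) * l ^ (-(-c - a))) := by
    rw [← rpow_add hl, ← rpow_natCast, ← rpow_neg hl.le, ← rpow_add hl]
    congr 1; push_cast; ring
  rw [betaPrimePDF, betaPrimePDF, betaFn_comm c a, hinv, mul_rpow (by linarith) (by positivity),
    inv_rpow hl.le, inv_rpow hl.le, ← rpow_neg hl.le, ← rpow_neg hl.le, hpow,
    show -c - a = -a - c by ring]
  ring

theorem integral_Ioi_comp_inv {E : Type*} [NormedAddCommGroup E] [NormedSpace ℝ E] (g : ℝ → E) :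
    ∫ l in Ioi 0, (l ^ 2)⁻¹ • g l⁻¹ = ∫ t in Ioi 0, g t := by
  rw [← integral_comp_rpow_Ioi g (p := -1) (by norm_num)]
  refine setIntegral_congr_fun measurableSet_Ioi fun l hl => ?_
  rw [rpow_neg_one, show (-1 : ℝ) - 1 = -(2 : ℕ) by norm_num, rpow_neg hl.le, rpow_natCast]
  simp only [abs_neg, abs_one, one_mul]

noncomputable def hypUKernel (η ν z t : ℝ) : ℝ :=
  exp (-z * t) * t ^ (η - 1) * (1 + t) ^ (ν - η - 1)

theorem Gamma_mul_hypU {η : ℝ} (hη : Gamma η ≠ 0) (ν z : ℝ) :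
    Gamma η * hypU η ν z = ∫ t in Ioi 0, hypUKernel η ν z t := by
  rw [hypU, mul_inv_cancel_left₀ hη]
  rfl

theorem normal_betaPrime_integrand_eq {q a c b l : ℝ} (hl : 0 < l) :
    (√(2 * π * q ^ 2 * l))⁻¹ * exp (-(b ^ 2) / (2 * q ^ 2 * l)) * betaPrimePDF a c l =
      (l ^ 2)⁻¹ * ((√(2 * π * q ^ 2))⁻¹ * (betaFn a c)⁻¹ *
        hypUKernel (c + 1/2) (3/2 - a) (b ^ 2 / (2 * q ^ 2)) l⁻¹) := by
  have hsqrt : (√(2 * π * q ^ 2 * l))⁻¹ = (√(2 * π * q ^ 2))⁻¹ * l⁻¹ ^ (1/2 : ℝ) := by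
    rw [sqrt_mul (by positivity), mul_inv, sqrt_eq_rpow l, inv_rpow hl.le]
  have hpow : l⁻¹ ^ (1/2 : ℝ) * l⁻¹ ^ (c - 1) = l⁻¹ ^ (c + 1/2 - 1) := by
    rw [← rpow_add (by positivity)]; ring_nf
  rw [betaPrimePDF_eq_inv_sq_mul_inv hl, betaPrimePDF, betaFn_comm c a, hsqrt, hypUKernel, ← hpow,
    show -(b ^ 2) / (2 * q ^ 2 * l) = -(b ^ 2 / (2 * q ^ 2)) * l⁻¹ by ring,
    show 3/2 - a - (c + 1/2) - 1 = -c - a by ring]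
  ring

theorem r2d2_marginal_density_general (q aπ a₂ b : ℝ)
    (ha₂ : 0 < a₂) :
    (∫ l in Ioi (0:ℝ),
        (Real.sqrt (2 * π * q ^ 2 * l))⁻¹ * exp (-(b ^ 2) / (2 * q ^ 2 * l)) *
          betaPrimePDF aπ a₂ l)
      = (Real.sqrt (2 * π * q ^ 2))⁻¹ * (betaFn aπ a₂)⁻¹ * Gamma (a₂ + 1/2) *
          hypU (a₂ + 1/2) (3/2 - aπ) (b ^ 2 / (2 * q ^ 2)) := by
  set C := (√(2 * π * q ^ 2))⁻¹ * (betaFn aπ a₂)⁻¹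
  set k := hypUKernel (a₂ + 1/2) (3/2 - aπ) (b ^ 2 / (2 * q ^ 2))
  have hΓ : Gamma (a₂ + 1/2) ≠ 0 := (Gamma_pos_of_pos (by positivity)).ne'
  calc _ = ∫ l in Ioi (0:ℝ), (l ^ 2)⁻¹ • (C * k l⁻¹) :=
        setIntegral_congr_fun measurableSet_Ioi fun l hl => normal_betaPrime_integrand_eq hl
    _ = ∫ t in Ioi (0:ℝ), C * k t := integral_Ioi_comp_inv fun t => C * k t
    _ = _ := by rw [integral_const_mul, ← Gamma_mul_hypU hΓ]; ring

/-- For b | λ² ~ Normal(0, q²λ²) and λ² ~ BetaPrime(a_π, a₂), the marginal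
density of b equals (2πq²)^{−1/2} B(a_π,a₂)^{−1} Γ(a₂+1/2) U(a₂+1/2, 3/2−a_π, b²/(2q²)). -/
theorem r2d2_marginal_density (q aπ a₂ b : ℝ) (hq : 0 < q) (haπ : 0 < aπ)
    (ha₂ : 0 < a₂) (hb : b ≠ 0) :
    (∫ l in Ioi (0:ℝ),
        (Real.sqrt (2 * π * q ^ 2 * l))⁻¹ * exp (-(b ^ 2) / (2 * q ^ 2 * l)) *
          betaPrimePDF aπ a₂ l)
      = (Real.sqrt (2 * π * q ^ 2))⁻¹ * (betaFn aπ a₂)⁻¹ * Gamma (a₂ + 1/2) *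
          hypU (a₂ + 1/2) (3/2 - aπ) (b ^ 2 / (2 * q ^ 2)) :=
  r2d2_marginal_density_general q aπ a₂ b ha₂
end

section
/- With the marginal prior p(b) from the normal–Beta-prime scale mixture (parameters a_π, a₂ > 0, scale q² > 0), as |b| → ∞ one has p(b) = O(|b|^{−(2a₂+1)}). Consequently, when 0 < a₂ < 1/2, p(b)·b² → ∞ as |b| → ∞, i.e., the tails are heavier than those of the Cauchy distribution. -/
open MeasureTheory Real Set Filter Asymptotics

/-- The marginal prior density of a coefficient `b` under the normal–Beta-prime scale
mixture: b | λ² ~ Normal(0, q²λ²), λ² ~ BetaPrime(a_π, a₂). -/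
noncomputable def r2d2MarginalPDF (q aπ a₂ b : ℝ) : ℝ :=
  ∫ l in Ioi (0:ℝ),
    (Real.sqrt (2 * π * q ^ 2 * l))⁻¹ * exp (-(b ^ 2) / (2 * q ^ 2 * l)) *
      betaPrimePDF aπ a₂ l

/-!
Integrating out the variance, `p(b) = (2π q²)^{-1/2} M(b² / (2q²))` with
`M(c) = ∫ l^{-1/2} e^{-c/l} β'(l) dl`, where `β'` is the Beta-prime density. Since
`β'(l) ≤ l^{-a₂-1} / B` everywhere and `β'(l) ≥ 2^{-a_π-a₂} l^{-a₂-1} / B` for `l ≥ 1`,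
the upper bound is an inverse-Gamma integral, `M(c) ≤ Γ(a₂ + 1/2) c^{-(a₂+1/2)} / B`, and
restricting to `l > c ≥ 1`, where `e^{-c/l} ≥ e^{-1}`, gives a lower bound of the same order. Hence
`p(b) ≍ |b|^{-(2a₂+1)}`, so `p(b) b² ≍ |b|^{1-2a₂}`, which diverges when `a₂ < 1/2`.
-/

lemma rpow_mul_exp_neg_div_eq_comp_inv {s c x : ℝ} (hx : 0 < x) :
    (|(-1 : ℝ)| * x ^ ((-1 : ℝ) - 1)) •
        ((x ^ (-1 : ℝ)) ^ (s - 1) * exp (-(c * x ^ (-1 : ℝ)))) =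
      x ^ (-s - 1) * exp (-c / x) := by
  rw [← rpow_mul hx.le, smul_eq_mul, rpow_neg_one, ← mul_assoc, abs_neg, abs_one, one_mul,
    ← rpow_add hx, neg_div, div_eq_mul_inv]
  ring_nf

lemma integrableOn_rpow_mul_exp_neg_div_Ioi {s c : ℝ} (hs : 0 < s) (hc : 0 < c) :
    IntegrableOn (fun x : ℝ => x ^ (-s - 1) * exp (-c / x)) (Ioi 0) := by
  have hgamma : IntegrableOn (fun y : ℝ => y ^ (s - 1) * exp (-(c * y))) (Ioi 0) := by
    simpa only [rpow_one, neg_mul] using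
      integrableOn_rpow_mul_exp_neg_mul_rpow (p := 1) (by linarith) one_pos hc
  exact ((integrableOn_Ioi_comp_rpow_iff _ (by norm_num : (-1 : ℝ) ≠ 0)).2 hgamma).congr_fun
    (fun x hx => rpow_mul_exp_neg_div_eq_comp_inv hx) measurableSet_Ioi

lemma integral_rpow_mul_exp_neg_div_Ioi {s c : ℝ} (hs : 0 < s) (hc : 0 < c) :
    ∫ x in Ioi (0 : ℝ), x ^ (-s - 1) * exp (-c / x) = (1 / c) ^ s * Gamma s := by
  rw [← integral_rpow_mul_exp_neg_mul_Ioi hs hc, ← integral_comp_rpow_Ioi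
    (fun y => y ^ (s - 1) * exp (-(c * y))) (by norm_num : (-1 : ℝ) ≠ 0)]
  exact setIntegral_congr_fun measurableSet_Ioi fun x hx =>
    (rpow_mul_exp_neg_div_eq_comp_inv hx).symm

lemma betaFn_pos {a b : ℝ} (ha : 0 < a) (hb : 0 < b) : 0 < betaFn a b :=
  div_pos (mul_pos (Gamma_pos_of_pos ha) (Gamma_pos_of_pos hb))
    (Gamma_pos_of_pos (add_pos ha hb))

lemma betaPrimePDF_nonneg {a b t : ℝ} (ha : 0 < a) (hb : 0 < b) (ht : 0 ≤ t) :
    0 ≤ betaPrimePDF a b t :=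
  div_nonneg (by positivity) (betaFn_pos ha hb).le

lemma betaPrimePDF_le {a b t : ℝ} (ha : 0 < a) (hb : 0 < b) (ht : 0 < t) :
    betaPrimePDF a b t ≤ t ^ (-b - 1) / betaFn a b := by
  refine div_le_div_of_nonneg_right ?_ (betaFn_pos ha hb).le
  calc t ^ (a - 1) * (1 + t) ^ (-a - b) ≤ t ^ (a - 1) * t ^ (-a - b) :=
        mul_le_mul_of_nonneg_left
          (rpow_le_rpow_of_nonpos ht (by linarith) (by linarith)) (by positivity)
    _ = t ^ (-b - 1) := by rw [← rpow_add ht]; ring_nf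

lemma le_betaPrimePDF {a b t : ℝ} (ha : 0 < a) (hb : 0 < b) (ht : 1 ≤ t) :
    2 ^ (-a - b) * t ^ (-b - 1) / betaFn a b ≤ betaPrimePDF a b t := by
  have ht₀ : 0 < t := by linarith
  refine div_le_div_of_nonneg_right ?_ (betaFn_pos ha hb).le
  calc 2 ^ (-a - b) * t ^ (-b - 1) = t ^ (a - 1) * (2 * t) ^ (-a - b) := by
        rw [mul_rpow zero_le_two ht₀.le, mul_left_comm, ← rpow_add ht₀]; ring_nf
    _ ≤ t ^ (a - 1) * (1 + t) ^ (-a - b) :=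
        mul_le_mul_of_nonneg_left
          (rpow_le_rpow_of_nonpos (by linarith) (by linarith) (by linarith)) (by positivity)

/-- The normal–Beta-prime scale mixture without its normalising factor `(2π q²)^{-1/2}`,
as a function of `c = b² / (2 q²)`. -/
noncomputable def betaPrimeScaleMixture (a b c : ℝ) : ℝ :=
  ∫ l in Ioi (0 : ℝ), l ^ (-(1 / 2 : ℝ)) * exp (-c / l) * betaPrimePDF a b l

section betaPrimeScaleMixture

variable {a b c : ℝ}

lemma measurable_betaPrimeScaleMixture_integrand :
    Measurable fun l : ℝ => l ^ (-(1 / 2 : ℝ)) * exp (-c / l) * betaPrimePDF a b l := by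
  unfold betaPrimePDF; fun_prop

lemma betaPrimeScaleMixture_integrand_nonneg (ha : 0 < a) (hb : 0 < b) {l : ℝ} (hl : 0 ≤ l) :
    0 ≤ l ^ (-(1 / 2 : ℝ)) * exp (-c / l) * betaPrimePDF a b l :=
  mul_nonneg (mul_nonneg (rpow_nonneg hl _) (exp_pos _).le) (betaPrimePDF_nonneg ha hb hl)

lemma betaPrimeScaleMixture_integrand_le (ha : 0 < a) (hb : 0 < b) {l : ℝ} (hl : 0 < l) :
    l ^ (-(1 / 2 : ℝ)) * exp (-c / l) * betaPrimePDF a b l ≤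
      (betaFn a b)⁻¹ * (l ^ (-(b + 1 / 2) - 1) * exp (-c / l)) := by
  calc l ^ (-(1 / 2 : ℝ)) * exp (-c / l) * betaPrimePDF a b l
      ≤ l ^ (-(1 / 2 : ℝ)) * exp (-c / l) * (l ^ (-b - 1) / betaFn a b) := by
        gcongr; exact betaPrimePDF_le ha hb hl
    _ = (betaFn a b)⁻¹ * (l ^ (-(b + 1 / 2) - 1) * exp (-c / l)) := by
        rw [show -(b + 1 / 2) - 1 = -(1 / 2) + (-b - 1) by ring, rpow_add hl]; ring

lemma le_betaPrimeScaleMixture_integrand (ha : 0 < a) (hb : 0 < b) {l : ℝ} (hl : 1 ≤ l)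
    (hcl : c ≤ l) :
    2 ^ (-a - b) * exp (-1) / betaFn a b * l ^ (-(b + 1 / 2) - 1) ≤
      l ^ (-(1 / 2 : ℝ)) * exp (-c / l) * betaPrimePDF a b l := by
  have hl₀ : 0 < l := by linarith
  have hexp : exp (-1) ≤ exp (-c / l) := by
    gcongr; rw [neg_div, neg_le_neg_iff, div_le_one hl₀]; exact hcl
  calc 2 ^ (-a - b) * exp (-1) / betaFn a b * l ^ (-(b + 1 / 2) - 1)
      = l ^ (-(1 / 2 : ℝ)) * exp (-1) * (2 ^ (-a - b) * l ^ (-b - 1) / betaFn a b) := by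
        rw [show -(b + 1 / 2) - 1 = -(1 / 2) + (-b - 1) by ring, rpow_add hl₀]; ring
    _ ≤ l ^ (-(1 / 2 : ℝ)) * exp (-c / l) * betaPrimePDF a b l := by
        gcongr
        · exact div_nonneg (by positivity) (betaFn_pos ha hb).le
        · exact le_betaPrimePDF ha hb hl

lemma integrableOn_betaPrimeScaleMixture_integrand (ha : 0 < a) (hb : 0 < b) (hc : 0 < c) :
    IntegrableOn (fun l : ℝ => l ^ (-(1 / 2 : ℝ)) * exp (-c / l) * betaPrimePDF a b l)
      (Ioi 0) := by
  refine ((integrableOn_rpow_mul_exp_neg_div_Ioi (s := b + 1 / 2) (by linarith) hc).const_mul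
    (betaFn a b)⁻¹).mono' measurable_betaPrimeScaleMixture_integrand.aestronglyMeasurable ?_
  filter_upwards [ae_restrict_mem measurableSet_Ioi] with l hl
  rw [norm_of_nonneg (betaPrimeScaleMixture_integrand_nonneg ha hb (le_of_lt hl))]
  exact betaPrimeScaleMixture_integrand_le ha hb hl

lemma betaPrimeScaleMixture_nonneg (ha : 0 < a) (hb : 0 < b) :
    0 ≤ betaPrimeScaleMixture a b c :=
  setIntegral_nonneg measurableSet_Ioi fun _ hl =>
    betaPrimeScaleMixture_integrand_nonneg ha hb (le_of_lt hl)

lemma betaPrimeScaleMixture_le (ha : 0 < a) (hb : 0 < b) (hc : 0 < c) :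
    betaPrimeScaleMixture a b c ≤ Gamma (b + 1 / 2) / betaFn a b * c ^ (-(b + 1 / 2)) := by
  have hs : 0 < b + 1 / 2 := by linarith
  calc betaPrimeScaleMixture a b c
      ≤ ∫ l in Ioi (0 : ℝ), (betaFn a b)⁻¹ * (l ^ (-(b + 1 / 2) - 1) * exp (-c / l)) :=
        setIntegral_mono_on (integrableOn_betaPrimeScaleMixture_integrand ha hb hc)
          ((integrableOn_rpow_mul_exp_neg_div_Ioi hs hc).const_mul _) measurableSet_Ioi
          fun l hl => betaPrimeScaleMixture_integrand_le ha hb hl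
    _ = Gamma (b + 1 / 2) / betaFn a b * c ^ (-(b + 1 / 2)) := by
        rw [integral_const_mul, integral_rpow_mul_exp_neg_div_Ioi hs hc, one_div,
          inv_rpow hc.le, ← rpow_neg hc.le]
        ring

lemma le_betaPrimeScaleMixture (ha : 0 < a) (hb : 0 < b) (hc : 1 ≤ c) :
    2 ^ (-a - b) * exp (-1) / (betaFn a b * (b + 1 / 2)) * c ^ (-(b + 1 / 2)) ≤
      betaPrimeScaleMixture a b c := by
  have hc₀ : 0 < c := by linarith
  have hs : 0 < b + 1 / 2 := by linarith
  have hint := integrableOn_betaPrimeScaleMixture_integrand ha hb hc₀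
  calc 2 ^ (-a - b) * exp (-1) / (betaFn a b * (b + 1 / 2)) * c ^ (-(b + 1 / 2))
      = ∫ l in Ioi c, 2 ^ (-a - b) * exp (-1) / betaFn a b * l ^ (-(b + 1 / 2) - 1) := by
        rw [integral_const_mul, integral_Ioi_rpow_of_lt (by linarith) hc₀,
          sub_add_cancel, neg_div_neg_eq]
        field_simp
    _ ≤ ∫ l in Ioi c, l ^ (-(1 / 2 : ℝ)) * exp (-c / l) * betaPrimePDF a b l :=
        setIntegral_mono_on ((integrableOn_Ioi_rpow_of_lt (by linarith) hc₀).const_mul _)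
          (hint.mono_set (Ioi_subset_Ioi hc₀.le)) measurableSet_Ioi
          fun l hl => le_betaPrimeScaleMixture_integrand ha hb (hc.trans hl.le) hl.le
    _ ≤ betaPrimeScaleMixture a b c := by
        refine setIntegral_mono_set hint ?_ (Ioi_subset_Ioi hc₀.le).eventuallyLE
        filter_upwards [ae_restrict_mem measurableSet_Ioi] with l hl
        exact betaPrimeScaleMixture_integrand_nonneg ha hb (le_of_lt hl)

lemma betaPrimeScaleMixture_isTheta (ha : 0 < a) (hb : 0 < b) :
    betaPrimeScaleMixture a b =Θ[atTop] fun c => c ^ (-(b + 1 / 2)) := by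
  have hlower : 0 < 2 ^ (-a - b) * exp (-1) / (betaFn a b * (b + 1 / 2)) :=
    div_pos (by positivity) (mul_pos (betaFn_pos ha hb) (by linarith))
  refine ⟨.of_bound (Gamma (b + 1 / 2) / betaFn a b) ?_,
    .of_bound (2 ^ (-a - b) * exp (-1) / (betaFn a b * (b + 1 / 2)))⁻¹ ?_⟩
  · filter_upwards [eventually_gt_atTop 0] with c hc
    rw [norm_of_nonneg (betaPrimeScaleMixture_nonneg ha hb), norm_of_nonneg (by positivity)]
    exact betaPrimeScaleMixture_le ha hb hc
  · filter_upwards [eventually_ge_atTop 1] with c hc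
    rw [norm_of_nonneg (betaPrimeScaleMixture_nonneg ha hb), norm_of_nonneg (by positivity),
      le_inv_mul_iff₀ hlower]
    exact le_betaPrimeScaleMixture ha hb hc

end betaPrimeScaleMixture

lemma r2d2MarginalPDF_eq (q aπ a₂ b : ℝ) :
    r2d2MarginalPDF q aπ a₂ b =
      (√(2 * π * q ^ 2))⁻¹ * betaPrimeScaleMixture aπ a₂ (b ^ 2 / (2 * q ^ 2)) := by
  rw [betaPrimeScaleMixture, ← integral_const_mul]
  refine setIntegral_congr_fun measurableSet_Ioi fun l hl => ?_
  rw [sqrt_mul (by positivity) l, sqrt_eq_rpow l, mul_inv, ← rpow_neg (le_of_lt hl)]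
  simp only [neg_div, div_div]
  ring

lemma r2d2MarginalPDF_nonneg (q : ℝ) {aπ a₂ : ℝ} (haπ : 0 < aπ) (ha₂ : 0 < a₂)
    (b : ℝ) :
    0 ≤ r2d2MarginalPDF q aπ a₂ b := by
  rw [r2d2MarginalPDF_eq]
  exact mul_nonneg (by positivity) (betaPrimeScaleMixture_nonneg haπ ha₂)

lemma tendsto_sq_div_cocompact_atTop {k : ℝ} (hk : 0 < k) :
    Tendsto (fun b : ℝ => b ^ 2 / k) (cocompact ℝ) atTop := by
  simpa only [Function.comp_apply, Real.norm_eq_abs, sq_abs] using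
    ((tendsto_pow_atTop two_ne_zero).comp (tendsto_norm_cocompact_atTop (E := ℝ))).atTop_div_const hk

lemma r2d2MarginalPDF_isTheta {q aπ a₂ : ℝ} (hq : q ≠ 0) (haπ : 0 < aπ) (ha₂ : 0 < a₂) :
    r2d2MarginalPDF q aπ a₂ =Θ[cocompact ℝ] fun b => |b| ^ (-(2 * a₂ + 1)) := by
  have hk : 0 < 2 * q ^ 2 := by positivity
  have hmix := betaPrimeScaleMixture_isTheta haπ ha₂
  have hcomp : (fun b => betaPrimeScaleMixture aπ a₂ (b ^ 2 / (2 * q ^ 2))) =Θ[cocompact ℝ]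
      fun b => (b ^ 2 / (2 * q ^ 2)) ^ (-(a₂ + 1 / 2)) :=
    ⟨hmix.1.comp_tendsto (tendsto_sq_div_cocompact_atTop hk),
      hmix.2.comp_tendsto (tendsto_sq_div_cocompact_atTop hk)⟩
  have hpow (b : ℝ) : (b ^ 2 / (2 * q ^ 2)) ^ (-(a₂ + 1 / 2)) =
      (2 * q ^ 2) ^ (a₂ + 1 / 2) * |b| ^ (-(2 * a₂ + 1)) := by
    rw [div_rpow (sq_nonneg b) hk.le, ← sq_abs, ← rpow_natCast, ← rpow_mul (abs_nonneg b),
      rpow_neg hk.le, div_inv_eq_mul]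
    ring_nf
  rw [show r2d2MarginalPDF q aπ a₂ = fun b => (√(2 * π * q ^ 2))⁻¹ *
      betaPrimeScaleMixture aπ a₂ (b ^ 2 / (2 * q ^ 2)) from funext (r2d2MarginalPDF_eq q aπ a₂),
    isTheta_const_mul_left (by positivity),
    ← isTheta_const_mul_right (rpow_pos_of_pos hk (a₂ + 1 / 2)).ne']
  exact hcomp.trans_eventuallyEq (.of_forall hpow)

/-- as |b| → ∞, p(b) = O(|b|^{−(2a₂+1)}); and if 0 < a₂ < 1/2 then
p(b)·b² → ∞, i.e. the tails are heavier than those of the Cauchy distribution. -/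
theorem r2d2_marginal_tail_behavior (q aπ a₂ : ℝ) (hq : 0 < q) (haπ : 0 < aπ)
    (ha₂ : 0 < a₂) :
    IsBigO (cocompact ℝ) (r2d2MarginalPDF q aπ a₂)
        (fun b => |b| ^ (-(2 * a₂ + 1))) ∧
    (a₂ < 1/2 →
      Tendsto (fun b => r2d2MarginalPDF q aπ a₂ b * b ^ 2) (cocompact ℝ) atTop) := by
  have hθ := r2d2MarginalPDF_isTheta hq.ne' haπ ha₂
  refine ⟨hθ.isBigO, fun ha => ?_⟩
  have hprod : (fun b => r2d2MarginalPDF q aπ a₂ b * b ^ 2) =Θ[cocompact ℝ]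
      fun b => |b| ^ (1 - 2 * a₂) := by
    refine (hθ.mul (isTheta_refl (fun b : ℝ => b ^ 2) _)).trans_eventuallyEq
      (Eventually.of_forall fun b => ?_)
    dsimp only
    rw [← sq_abs, ← rpow_natCast, ← rpow_add' (abs_nonneg b) (by norm_num; linarith)]
    ring_nf
  have hgrowth : Tendsto (fun b : ℝ => ‖|b| ^ (1 - 2 * a₂)‖) (cocompact ℝ) atTop :=
    tendsto_norm_atTop_atTop.comp
      ((tendsto_rpow_atTop (by linarith)).comp (tendsto_norm_cocompact_atTop (E := ℝ)))
  refine (hprod.tendsto_norm_atTop_iff.2 hgrowth).congr fun b => ?_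
  exact norm_of_nonneg (mul_nonneg (r2d2MarginalPDF_nonneg q haπ ha₂ b) (sq_nonneg b))
end

section
/- Define κ = 1/(1 + rφτ²) for fixed constants r > 0, φ > 0, where τ² ~ BetaPrime(a₁, a₂). Then κ has density p(κ) = (rφ)^{a₂}/B(a₁,a₂) · (1−κ)^{a₁−1} κ^{a₂−1} ((rφ−1)κ + 1)^{−a₁−a₂} on (0,1). -/
/-!
Write `c = rφ`. The map `t ↦ 1 / (1 + c t)` is a bijection of `(0, ∞)` onto `(0, 1)` with inverse
`h k = (1 - k) / (c k)`, so by the one-dimensional change of variables the law of `κ` has density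
`|h'(k)| · p(h k) = p(h k) / (c k²)` on `(0, 1)`, where `p` is the Beta-prime density. Since
`1 + h k = ((c - 1) k + 1) / (c k)`, the powers of `c k` collapse to `c^{a₂} k^{a₂ - 1} / (c k²)`.
-/

open MeasureTheory Real Set

open scoped ENNReal

theorem map_withDensity_indicator_of_leftInvOn {G h h' : ℝ → ℝ} {s t : Set ℝ} {ρ : ℝ → ℝ≥0∞}
    (hG : Measurable G) (hs : MeasurableSet s) (ht : MeasurableSet t)
    (himage : h '' t = s) (hinv : LeftInvOn G h t)
    (hh' : ∀ k ∈ t, HasDerivWithinAt h (h' k) t k) :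
    (volume.withDensity (s.indicator ρ)).map G =
      volume.withDensity (t.indicator fun k => ENNReal.ofReal |h' k| * ρ (h k)) := by
  ext A hA
  rw [Measure.map_apply hG hA, withDensity_apply _ (hG hA), withDensity_apply _ hA,
    setLIntegral_indicator hs, setLIntegral_indicator ht, inter_comm s, inter_comm t, ← himage,
    ← hinv.image_inter',
    lintegral_image_eq_lintegral_abs_deriv_mul (hA.inter ht)
      (fun k hk => (hh' k hk.2).mono inter_subset_right) (hinv.injOn.mono inter_subset_right)]

theorem map_withDensity_ofReal_indicator_of_leftInvOn {G h h' ρ : ℝ → ℝ} {s t : Set ℝ}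
    (hG : Measurable G) (hs : MeasurableSet s) (ht : MeasurableSet t)
    (himage : h '' t = s) (hinv : LeftInvOn G h t)
    (hh' : ∀ k ∈ t, HasDerivWithinAt h (h' k) t k) :
    (volume.withDensity fun x => ENNReal.ofReal (s.indicator ρ x)).map G =
      volume.withDensity fun k => ENNReal.ofReal (t.indicator (fun k => |h' k| * ρ (h k)) k) := by
  have hcomm (u : Set ℝ) (f : ℝ → ℝ) :
      (fun x => ENNReal.ofReal (u.indicator f x)) = u.indicator fun x => ENNReal.ofReal (f x) :=
    (indicator_comp_of_zero ENNReal.ofReal_zero).symm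
  simp only [hcomm, ENNReal.ofReal_mul (abs_nonneg _)]
  exact map_withDensity_indicator_of_leftInvOn hG hs ht himage hinv hh'

section Shrinkage

variable {c : ℝ}

theorem invOn_shrinkage (hc : 0 < c) :
    InvOn (fun t => 1 / (1 + c * t)) (fun k => (1 - k) / (c * k)) (Ioo 0 1) (Ioi 0) := by
  constructor
  · rintro k ⟨hk0, -⟩
    field_simp
    ring
  · rintro t (ht : 0 < t)
    have hden : 0 < 1 + c * t := by positivity
    field_simp
    ring

theorem bijOn_shrinkage_inv (hc : 0 < c) :
    BijOn (fun k => (1 - k) / (c * k)) (Ioo 0 1) (Ioi 0) := by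
  refine (invOn_shrinkage hc).bijOn ?_ ?_
  · rintro k ⟨hk0, hk1⟩
    show 0 < (1 - k) / (c * k)
    exact div_pos (by linarith) (by positivity)
  · rintro t (ht : 0 < t)
    have hden : 0 < 1 + c * t := by positivity
    constructor
    · positivity
    · rw [div_lt_one hden]; nlinarith

theorem hasDerivAt_shrinkage_inv {k : ℝ} (hc : 0 < c) (hk : k ≠ 0) :
    HasDerivAt (fun k => (1 - k) / (c * k)) (-(1 / (c * k ^ 2))) k := by
  have hnum : HasDerivAt (fun k : ℝ => 1 - k) (-1) k := by
    simpa using (hasDerivAt_id k).const_sub 1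
  have hden : HasDerivAt (fun k : ℝ => c * k) c k := by
    simpa using (hasDerivAt_id k).const_mul c
  refine (hnum.div hden (mul_ne_zero hc.ne' hk)).congr_deriv ?_
  field_simp
  ring

theorem betaPrimePDF_shrinkage_inv (a₁ a₂ : ℝ) {k : ℝ} (hc : 0 < c) (hk : k ∈ Ioo 0 1) :
    1 / (c * k ^ 2) * betaPrimePDF a₁ a₂ ((1 - k) / (c * k)) =
      c ^ a₂ / betaFn a₁ a₂ * (1 - k) ^ (a₁ - 1) * k ^ (a₂ - 1) *
        ((c - 1) * k + 1) ^ (-a₁ - a₂) := by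
  obtain ⟨hk0, hk1⟩ := hk
  have hck : 0 < c * k := by positivity
  have hD : 0 < (c - 1) * k + 1 := by nlinarith
  have h1t : 1 + (1 - k) / (c * k) = ((c - 1) * k + 1) / (c * k) := by
    field_simp; ring
  have hpow : (c * k) ^ (a₁ - 1) * (c * k) ^ (-a₁ - a₂) * (c ^ a₂ * k ^ a₂ * (c * k)) = 1 := by
    calc _ = (c * k) ^ ((a₁ - 1) + (-a₁ - a₂) + (a₂ + 1)) := by
          rw [rpow_add hck, rpow_add hck, rpow_add_one hck.ne', ← mul_rpow hc.le hk0.le]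
      _ = 1 := by ring_nf; exact rpow_zero _
  unfold betaPrimePDF
  rw [h1t, div_rpow (by linarith) hck.le, div_rpow hD.le hck.le, rpow_sub_one hk0.ne']
  have hP : (c * k) ^ (a₁ - 1) ≠ 0 := by positivity
  have hQ : (c * k) ^ (-a₁ - a₂) ≠ 0 := by positivity
  generalize ((c - 1) * k + 1) ^ (-a₁ - a₂) = D
  field_simp
  linear_combination (-(D / betaFn a₁ a₂)) * hpow

end Shrinkage

theorem shrinkage_factor_density_general (Ω : Type*) [MeasurableSpace Ω] (μ : Measure Ω)
    (a₁ a₂ r φ : ℝ) (hr : 0 < r) (hφ : 0 < φ) (τ2 : Ω → ℝ) (hτ2 : Measurable τ2)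
    (hlaw : Measure.map τ2 μ = (volume : Measure ℝ).withDensity
      (fun t => ENNReal.ofReal (Set.indicator (Set.Ioi 0) (betaPrimePDF a₁ a₂) t))) :
    Measure.map (fun ω => 1 / (1 + r * φ * τ2 ω)) μ
      = (volume : Measure ℝ).withDensity
          (fun k => ENNReal.ofReal (Set.indicator (Set.Ioo 0 1)
            (fun k => (r * φ) ^ a₂ / betaFn a₁ a₂ * (1 - k) ^ (a₁ - 1) * k ^ (a₂ - 1) *
              ((r * φ - 1) * k + 1) ^ (-a₁ - a₂)) k)) := by
  have hc : 0 < r * φ := mul_pos hr hφ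
  have hG : Measurable fun t : ℝ => 1 / (1 + r * φ * t) := by fun_prop
  rw [show (fun ω => 1 / (1 + r * φ * τ2 ω)) = (fun t => 1 / (1 + r * φ * t)) ∘ τ2 from rfl,
    ← Measure.map_map hG hτ2, hlaw,
    map_withDensity_ofReal_indicator_of_leftInvOn hG measurableSet_Ioi measurableSet_Ioo
      (bijOn_shrinkage_inv hc).image_eq (invOn_shrinkage hc).1
      (fun k hk => (hasDerivAt_shrinkage_inv hc hk.1.ne').hasDerivWithinAt)]
  congr with k
  refine congrArg ENNReal.ofReal (congrFun (indicator_congr fun k hk => ?_) k)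
  rw [abs_neg, abs_of_pos (by have := hk.1; positivity)]
  exact betaPrimePDF_shrinkage_inv a₁ a₂ hc hk

/-- if κ = 1/(1 + rφτ²) with r, φ > 0 and τ² ~ BetaPrime(a₁, a₂), then κ
has density (rφ)^{a₂}/B(a₁,a₂) · (1−κ)^{a₁−1} κ^{a₂−1} ((rφ−1)κ+1)^{−a₁−a₂} on (0,1). -/
theorem shrinkage_factor_density (Ω : Type*) [MeasurableSpace Ω] (μ : Measure Ω)
    [IsProbabilityMeasure μ] (a₁ a₂ r φ : ℝ) (ha₁ : 0 < a₁) (ha₂ : 0 < a₂)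
    (hr : 0 < r) (hφ : 0 < φ) (τ2 : Ω → ℝ) (hτ2 : Measurable τ2)
    (hlaw : Measure.map τ2 μ = (volume : Measure ℝ).withDensity
      (fun t => ENNReal.ofReal (Set.indicator (Set.Ioi 0) (betaPrimePDF a₁ a₂) t))) :
    Measure.map (fun ω => 1 / (1 + r * φ * τ2 ω)) μ
      = (volume : Measure ℝ).withDensity
          (fun k => ENNReal.ofReal (Set.indicator (Set.Ioo 0 1)
            (fun k => (r * φ) ^ a₂ / betaFn a₁ a₂ * (1 - k) ^ (a₁ - 1) * k ^ (a₂ - 1) *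
              ((r * φ - 1) * k + 1) ^ (-a₁ - a₂)) k)) :=
  shrinkage_factor_density_general Ω μ a₁ a₂ r φ hr hφ τ2 hτ2 hlaw
end

section
/- With κ = 1/(1 + rφτ²), τ² ~ BetaPrime(a₁, a₂), the m-th moment is E(κᵐ) = (rφ)^{a₂}/B(a₁,a₂) · B(a₂+m, a₁) · ₂F₁(a₁+a₂, a₂+m; a₁+a₂+m; 1−rφ), for any positive integer m, provided 0 < rφ (so the argument 1−rφ < 1). -/
/-!
The substitution `u = 1 / (1 + rφ t)` maps `(0, ∞)` onto `(0, 1)` and turns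
`(1 + rφ t)^{-m} t^{a₁-1} (1 + t)^{-a₁-a₂} dt` into
`(rφ)^{a₂} u^{a₂+m-1} (1 - u)^{a₁-1} (1 - (1 - rφ) u)^{-(a₁+a₂)} du`,
which is Euler's integral for `B(a₂+m, a₁) · ₂F₁(a₁+a₂, a₂+m; a₁+a₂+m; 1 - rφ)`.
The argument works verbatim for any real order `m` with `a₂ + m > 0`.
-/

open MeasureTheory Real Set

/-- The Gauss hypergeometric function ₂F₁, via Euler's integral representation
(valid for γ > β > 0). -/
noncomputable def hyp2F1 (a b c z : ℝ) : ℝ :=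
  Gamma c / (Gamma b * Gamma (c - b)) *
    ∫ u in Ioo (0:ℝ) 1, u ^ (b - 1) * (1 - u) ^ (c - b - 1) * (1 - z * u) ^ (-a)

theorem betaFn_mul_hyp2F1 {a b d z : ℝ} (hb : 0 < b) (hd : 0 < d) :
    betaFn b d * hyp2F1 a b (b + d) z =
      ∫ u in Ioo (0:ℝ) 1, u ^ (b - 1) * (1 - u) ^ (d - 1) * (1 - z * u) ^ (-a) := by
  have hGb := (Gamma_pos_of_pos hb).ne'
  have hGd := (Gamma_pos_of_pos hd).ne'
  have hGbd := (Gamma_pos_of_pos (add_pos hb hd)).ne'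
  rw [hyp2F1, add_sub_cancel_left, ← mul_assoc, betaFn, div_mul_div_comm,
    mul_comm (Gamma b * Gamma d), div_self (mul_ne_zero hGbd (mul_ne_zero hGb hGd)), one_mul]

lemma injective_inv_one_add_mul {c : ℝ} (hc : c ≠ 0) :
    Function.Injective fun t : ℝ => (1 + c * t)⁻¹ :=
  fun _ _ h => mul_left_cancel₀ hc (add_left_cancel (inv_injective h))

lemma image_inv_one_add_mul_Ioi {c : ℝ} (hc : 0 < c) :
    (fun t => (1 + c * t)⁻¹) '' Ioi 0 = Ioo (0:ℝ) 1 := by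
  ext u
  constructor
  · rintro ⟨t, ht : 0 < t, rfl⟩
    exact ⟨by positivity, inv_lt_one_of_one_lt₀ (by nlinarith)⟩
  · rintro ⟨hu0, hu1⟩
    refine ⟨(1 - u) / (c * u), div_pos (sub_pos.2 hu1) (by positivity), ?_⟩
    field_simp
    ring

theorem setIntegral_Ioo_eq_setIntegral_Ioi_inv_one_add_mul {c : ℝ} (hc : 0 < c)
    (f : ℝ → ℝ) :
    ∫ u in Ioo (0:ℝ) 1, f u =
      ∫ t in Ioi (0:ℝ), c / (1 + c * t) ^ 2 * f (1 + c * t)⁻¹ := by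
  have hderiv (t : ℝ) (ht : t ∈ Ioi 0) :
      HasDerivWithinAt (fun t => (1 + c * t)⁻¹) (-c / (1 + c * t) ^ 2) (Ioi 0) t := by
    have hX : 1 + c * t ≠ 0 := (add_pos one_pos (mul_pos hc ht)).ne'
    have := (((hasDerivAt_id t).const_mul c).const_add 1).inv hX
    simp only [id, mul_one] at this
    exact this.hasDerivWithinAt
  rw [← image_inv_one_add_mul_Ioi hc, integral_image_eq_integral_abs_deriv_smul measurableSet_Ioi
    hderiv (injective_inv_one_add_mul hc.ne').injOn]
  refine setIntegral_congr_fun measurableSet_Ioi fun t (ht : 0 < t) => ?_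
  rw [smul_eq_mul, abs_div, abs_neg, abs_of_pos hc, abs_of_pos (by positivity)]

lemma jacobian_mul_euler_integrand_inv_one_add_mul {a b c s t : ℝ} (hc : 0 < c) (ht : 0 < t) :
    c ^ b * (c / (1 + c * t) ^ 2 * ((1 + c * t)⁻¹ ^ (b + s - 1) *
      (1 - (1 + c * t)⁻¹) ^ (a - 1) * (1 - (1 - c) * (1 + c * t)⁻¹) ^ (-(a + b))))
    = (1 / (1 + c * t)) ^ s * (t ^ (a - 1) * (1 + t) ^ (-a - b)) := by
  have hX : 0 < 1 + c * t := by positivity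
  have h1 : 1 - (1 + c * t)⁻¹ = c * t / (1 + c * t) := by field_simp; ring
  have h2 : 1 - (1 - c) * (1 + c * t)⁻¹ = c * (1 + t) / (1 + c * t) := by field_simp; ring
  rw [h1, h2]
  refine log_injOn_pos (mem_Ioi.2 (by positivity)) (mem_Ioi.2 (by positivity)) ?_
  simp (disch := positivity) only [log_mul, log_div, log_rpow, log_inv, log_pow, log_one]
  ring

theorem setIntegral_rpow_shrinkage_mul_betaPrimePDF {a b c s : ℝ} (ha : 0 < a) (hbs : 0 < b + s)
    (hc : 0 < c) :
    ∫ t in Ioi (0:ℝ), (1 / (1 + c * t)) ^ s * betaPrimePDF a b t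
      = c ^ b / betaFn a b * betaFn (b + s) a * hyp2F1 (a + b) (b + s) (a + b + s) (1 - c) := by
  have hEuler : betaFn (b + s) a * hyp2F1 (a + b) (b + s) (a + b + s) (1 - c) =
      ∫ u in Ioo (0:ℝ) 1,
        u ^ (b + s - 1) * (1 - u) ^ (a - 1) * (1 - (1 - c) * u) ^ (-(a + b)) := by
    rw [show a + b + s = b + s + a by ring, betaFn_mul_hyp2F1 hbs ha]
  calc ∫ t in Ioi (0:ℝ), (1 / (1 + c * t)) ^ s * betaPrimePDF a b t
      = (∫ t in Ioi (0:ℝ), (1 / (1 + c * t)) ^ s * (t ^ (a - 1) * (1 + t) ^ (-a - b)))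
          / betaFn a b := by
        rw [← integral_div]
        simp only [betaPrimePDF, mul_div_assoc]
    _ = c ^ b * (∫ u in Ioo (0:ℝ) 1,
          u ^ (b + s - 1) * (1 - u) ^ (a - 1) * (1 - (1 - c) * u) ^ (-(a + b))) / betaFn a b := by
        rw [setIntegral_Ioo_eq_setIntegral_Ioi_inv_one_add_mul hc, ← integral_const_mul]
        congr 1
        exact setIntegral_congr_fun measurableSet_Ioi fun t (ht : 0 < t) =>
          (jacobian_mul_euler_integrand_inv_one_add_mul hc ht).symm
    _ = _ := by rw [← hEuler]; ring

theorem shrinkage_factor_moments_general (a₁ a₂ r φ : ℝ) (m : ℕ) (ha₁ : 0 < a₁)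
    (ha₂ : 0 < a₂) (hr : 0 < r) (hφ : 0 < φ) :
    (∫ t in Ioi (0:ℝ), (1 / (1 + r * φ * t)) ^ m * betaPrimePDF a₁ a₂ t)
      = (r * φ) ^ a₂ / betaFn a₁ a₂ * betaFn (a₂ + m) a₁ *
          hyp2F1 (a₁ + a₂) (a₂ + m) (a₁ + a₂ + m) (1 - r * φ) := by
  simpa only [rpow_natCast] using
    setIntegral_rpow_shrinkage_mul_betaPrimePDF (s := m) ha₁ (by positivity) (mul_pos hr hφ)

/-- with κ = 1/(1+rφτ²), τ² ~ BetaPrime(a₁,a₂), r, φ > 0 and m a positive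
integer, E(κᵐ) = (rφ)^{a₂}/B(a₁,a₂) · B(a₂+m, a₁) · ₂F₁(a₁+a₂, a₂+m; a₁+a₂+m; 1−rφ). -/
theorem shrinkage_factor_moments (a₁ a₂ r φ : ℝ) (m : ℕ) (ha₁ : 0 < a₁)
    (ha₂ : 0 < a₂) (hr : 0 < r) (hφ : 0 < φ) (hm : 0 < m) :
    (∫ t in Ioi (0:ℝ), (1 / (1 + r * φ * t)) ^ m * betaPrimePDF a₁ a₂ t)
      = (r * φ) ^ a₂ / betaFn a₁ a₂ * betaFn (a₂ + m) a₁ *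
          hyp2F1 (a₁ + a₂) (a₂ + m) (a₁ + a₂ + m) (1 - r * φ) :=
  shrinkage_factor_moments_general a₁ a₂ r φ m ha₁ ha₂ hr hφ
end
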